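/- Let C be a directed cycle on vertices {1,…,N} (N ≥ 2) and let H be a connected graph on the same vertex set. Then there exists a set of N−1 coded symbols, each of the form x_i ⊕ x_j with (i,j) ∈ E(H), such that every vertex r can recover x_r using the coded symbols together with its side information x_{r+1} (the next vertex along the cycle). -/
import Mathlib

lemma parent_exists {V : Type*} (H : SimpleGraph V) (hH : H.Connected)
    (v0 v : V) (hv : v ≠ v0) :
    ∃ w, H.Adj v w ∧ H.dist w v0 < H.dist v v0 := by
  obtain ⟨p, hp⟩ := hH.exists_walk_length_eq_dist v v0
  cases p with
  | nil => exact absurd rfl hv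
  | cons h q =>
    refine ⟨_, h, ?_⟩
    have : H.dist _ v0 ≤ q.length := SimpleGraph.dist_le q
    simp [SimpleGraph.Walk.length_cons] at hp
    omega

/-- For a directed cycle on {0,…,N−1} (N ≥ 2) where receiver r has side information
x_{r+1}, and a connected graph H on the same vertices, there exist N−1 coded symbols,
each of the form x_i ⊕ x_j with (i,j) an edge of H, from which every vertex r can
recover x_r using its side information x_{r+1}. -/
theorem stmt18 (N t : ℕ) (hN : 2 ≤ N) (H : SimpleGraph (Fin N)) (hH : H.Connected) :
    ∃ e : Fin (N - 1) → Fin N × Fin N,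
      (∀ k, H.Adj (e k).1 (e k).2) ∧
      ∀ (x x' : Fin N → Fin t → ZMod 2) (r : Fin N),
        (∀ k, x (e k).1 + x (e k).2 = x' (e k).1 + x' (e k).2) →
        x (r + ⟨1, by omega⟩) = x' (r + ⟨1, by omega⟩) →
        x r = x' r := by
  classical
  -- parent function
  set z : Fin N := ⟨0, by omega⟩ with hz
  have hpar : ∀ v : Fin N, v ≠ z → ∃ w, H.Adj v w ∧ H.dist w z < H.dist v z :=
    parent_exists H hH z
  choose par hadj hdist using hpar
  -- index nonzero vertices by Fin (N-1)
  set e : Fin (N - 1) → Fin N × Fin N := fun k =>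
    let v : Fin N := ⟨k.1 + 1, by omega⟩
    (v, par v (by simp [Fin.ext_iff, v, hz]))
  refine ⟨e, fun k => hadj _ _, ?_⟩
  intro x x' r hsum hside
  -- the difference is constant
  have key : ∀ n (v : Fin N), H.dist v z = n → x v + x' v = x z + x' z := by
    intro n
    induction n using Nat.strong_induction_on with
    | _ n ih =>
      intro v hd
      by_cases hv : v = z
      · subst hv; rfl
      · have hvne : v.1 ≠ 0 := fun h => hv (by simp [hz, Fin.ext_iff, h])
        have hklt : v.1 - 1 < N - 1 := by have := v.2; omega
        have hek : e ⟨v.1 - 1, hklt⟩ = (v, par v hv) := by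
          simp only [e]
          congr 1 <;> [skip; congr 1] <;> exact Fin.ext (by simp; omega)
        have h1 := hsum ⟨v.1 - 1, hklt⟩
        rw [hek] at h1
        have h2 : x v + x' v = x (par v hv) + x' (par v hv) := by
          funext j
          have := congrFun h1 j
          simp only [Pi.add_apply] at this ⊢
          generalize x v j = a at this ⊢
          generalize x' v j = b at this ⊢
          generalize x (par v hv) j = c at this ⊢
          generalize x' (par v hv) j = d at this ⊢
          revert this; revert a b c d; decide
        rw [h2]
        exact ih _ (hd ▸ hdist v hv) _ rfl
  have key' : ∀ v : Fin N, x v + x' v = x z + x' z := fun v => key _ v rfl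
  have h1 : x r + x' r = x (r + ⟨1, by omega⟩) + x' (r + ⟨1, by omega⟩) := by
    rw [key' r, key' (r + ⟨1, by omega⟩)]
  rw [hside] at h1
  funext j
  have := congrFun h1 j
  simp only [Pi.add_apply] at this
  generalize x r j = a at this ⊢
  generalize x' r j = b at this ⊢
  generalize x' (r + ⟨1, by omega⟩) j = c at this
  revert this; revert a b c; decide
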